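/- Let n ≥ 2, let G be a spray on ℝⁿ, let c : I → ℝⁿ be a geodesic of G, and let V : I × (−ε,ε)^{n−1} → ℝⁿ be an (n−1)-parameter geodesic variation of c. Let e₁,…,e_{n−1} be parallel vector fields along c such that {c'(t), e₁(t),…,e_{n−1}(t)} is a basis of ℝⁿ for every t ∈ I, and let J : I → End(ℝⁿ) be the (unique) field of endomorphisms determined by J(t)·c'(t) = 0 and J(t)·e_a(t) = ∂_{s^a}V(t,0,…,0) for a = 1,…,n−1 and t ∈ I. Then J is C^∞ and is a Jacobi tensor along c: ∇²J + Φ∘J = 0. -/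

import Mathlib

noncomputable section

/-- Euclidean coordinate space `ℝⁿ`. -/
abbrev En (n : ℕ) : Type := Fin n → ℝ

/-- A semispray on `ℝⁿ` in coordinates: a map `G : ℝⁿ × (ℝⁿ ∖ {0}) → ℝⁿ` that is
`C^∞` on the set where the second (velocity) variable is nonzero. -/
def IsSemispray (n : ℕ) (G : En n × En n → En n) : Prop :=
  ContDiffOn ℝ (⊤ : ℕ∞) G {p : En n × En n | p.2 ≠ 0}

/-- A spray: a semispray that is positively `2`-homogeneous in the velocity variable. -/
def IsSpray (n : ℕ) (G : En n × En n → En n) : Prop :=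
  IsSemispray n G ∧
    ∀ (x y : En n), y ≠ 0 → ∀ l : ℝ, 0 < l → G (x, l • y) = l ^ 2 • G (x, y)

/-- `c` is a geodesic of the semispray `G` on the set `I`:
`c` is `C^∞` on `I`, regular, and `c'' + 2 G(c, c') = 0` on `I`. -/
def IsGeodesicOn (n : ℕ) (G : En n × En n → En n) (c : ℝ → En n) (I : Set ℝ) : Prop :=
  ContDiffOn ℝ (⊤ : ℕ∞) c I ∧ (∀ t ∈ I, deriv c t ≠ 0) ∧
    ∀ t ∈ I, deriv (deriv c) t + (2 : ℝ) • G (c t, deriv c t) = 0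

/-- Partial Fréchet derivative of `G` in its first (base) variable. -/
def DxG (n : ℕ) (G : En n × En n → En n) (x y : En n) : En n →L[ℝ] En n :=
  fderiv ℝ (fun x' => G (x', y)) x

/-- Partial Fréchet derivative of `G` in its second (velocity) variable. -/
def DyG (n : ℕ) (G : En n × En n → En n) (x y : En n) : En n →L[ℝ] En n :=
  fderiv ℝ (fun y' => G (x, y')) y

/-- `N(t) = D_yG(c(t), c'(t))` along a curve `c`. -/
def Nc (n : ℕ) (G : En n × En n → En n) (c : ℝ → En n) (t : ℝ) : En n →L[ℝ] En n :=
  DyG n G (c t) (deriv c t)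

/-- Dynamical covariant derivative `∇v = v' + N·v` of a vector field `v` along `c`. -/
def covV (n : ℕ) (G : En n × En n → En n) (c : ℝ → En n) (v : ℝ → En n) (t : ℝ) : En n :=
  deriv v t + Nc n G c t (v t)

/-- Dynamical covariant derivative `∇J = J' + N∘J − J∘N` of an endomorphism field `J`
along `c`. -/
def covE (n : ℕ) (G : En n × En n → En n) (c : ℝ → En n)
    (J : ℝ → En n →L[ℝ] En n) (t : ℝ) : En n →L[ℝ] En n :=
  deriv J t + (Nc n G c t).comp (J t) - (J t).comp (Nc n G c t)

/-- Jacobi endomorphism `Φ = 2 D_xG(c,c') − N' − N∘N` along `c`. -/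
def Phi (n : ℕ) (G : En n × En n → En n) (c : ℝ → En n) (t : ℝ) : En n →L[ℝ] En n :=
  (2 : ℝ) • DxG n G (c t) (deriv c t) - deriv (fun t' => Nc n G c t') t
    - (Nc n G c t).comp (Nc n G c t)

/-- A parallel vector field along `c` on `I`: `∇v = v' + N·v = 0`. -/
def IsParallel (n : ℕ) (G : En n × En n → En n) (c : ℝ → En n) (I : Set ℝ)
    (v : ℝ → En n) : Prop :=
  ContDiffOn ℝ (⊤ : ℕ∞) v I ∧ ∀ t ∈ I, deriv v t + Nc n G c t (v t) = 0

/-- A Jacobi field along a geodesic `c` on `I`: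
`j'' + 2 D_yG(c,c')·j' + 2 D_xG(c,c')·j = 0`. -/
def IsJacobiField (n : ℕ) (G : En n × En n → En n) (c : ℝ → En n) (I : Set ℝ)
    (j : ℝ → En n) : Prop :=
  ContDiffOn ℝ (⊤ : ℕ∞) j I ∧ ∀ t ∈ I,
    deriv (deriv j) t + (2 : ℝ) • DyG n G (c t) (deriv c t) (deriv j t)
      + (2 : ℝ) • DxG n G (c t) (deriv c t) (j t) = 0

/-- A Jacobi tensor along `c` on `I`: a `C^∞` endomorphism field with `∇²J + Φ∘J = 0`. -/
def IsJacobiTensor (n : ℕ) (G : En n × En n → En n) (c : ℝ → En n) (I : Set ℝ)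
    (J : ℝ → En n →L[ℝ] En n) : Prop :=
  ContDiffOn ℝ (⊤ : ℕ∞) J I ∧ ∀ t ∈ I,
    covE n G c (fun t' => covE n G c J t') t + (Phi n G c t).comp (J t) = 0

/-- The open cube `(−ε, ε)^k`. -/
def cube (k : ℕ) (ε : ℝ) : Set (Fin k → ℝ) := {s | ∀ i, |s i| < ε}

/-- A `k`-parameter geodesic variation of the geodesic `c` on `I`:
a `C^∞` map `V : I × (−ε,ε)^k → ℝⁿ` with `V(t,0) = c(t)` and every `t ↦ V(t,s)`
a geodesic of `G` on `I`. -/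
def IsGeodesicVariation (n : ℕ) (G : En n × En n → En n) (c : ℝ → En n) (I : Set ℝ)
    (k : ℕ) (ε : ℝ) (V : ℝ × (Fin k → ℝ) → En n) : Prop :=
  ContDiffOn ℝ (⊤ : ℕ∞) V (I ×ˢ cube k ε) ∧ (∀ t ∈ I, V (t, 0) = c t) ∧
    ∀ s ∈ cube k ε, IsGeodesicOn n G (fun t => V (t, s)) I

/-- `∂_{s^a} V (t, 0)`: the variation vector field in direction `a` along the base curve. -/
def dS (n k : ℕ) (V : ℝ × (Fin k → ℝ) → En n) (a : Fin k) (t : ℝ) : En n :=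
  fderiv ℝ (fun s => V (t, s)) 0 (Pi.single a 1)

/-- The span `W_t` of a transversal frame `e₁(t), …, e_m(t)` along `c`. -/
def Wspan (n m : ℕ) (e : Fin m → ℝ → En n) (t : ℝ) : Submodule ℝ (En n) :=
  Submodule.span ℝ (Set.range fun a => e a t)

/-- A family `e₁, …, e_m` of parallel vector fields along `c` on `I` such that
`{c'(t), e₁(t), …, e_m(t)}` is a basis of `ℝⁿ` for every `t ∈ I`. -/
def IsParallelFrame (n m : ℕ) (G : En n × En n → En n) (c : ℝ → En n) (I : Set ℝ)
    (e : Fin m → ℝ → En n) : Prop :=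
  (∀ a, IsParallel n G c I (e a)) ∧
    ∀ t ∈ I,
      LinearIndependent ℝ (fun i : Option (Fin m) => i.elim (deriv c t) fun a => e a t) ∧
      Submodule.span ℝ
        (Set.range fun i : Option (Fin m) => i.elim (deriv c t) fun a => e a t) = ⊤

/-! The variation fields `∂_{s^a}V(·,0)` are Jacobi fields: differentiate the geodesic equation
`∂_t²V + 2 G(V, ∂_tV) = 0` in `s^a` and exchange the order of the partial derivatives. The velocity
`c'` is parallel by Euler's relation `D_yG(x,y)·y = 2 G(x,y)`, so `(c', e₁, …, e_{n-1})` is a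
parallel frame; `J` is smooth because `J = Q ∘ P⁻¹`, where `P` sends the standard basis to this
frame and `Q` to its image under `J`. For a parallel field `v` one has `(∇J)v = ∇(Jv)`, hence
`(∇²J + ΦJ)v = ∇²(Jv) + Φ(Jv)`, and for a Jacobi field `j` the expression `∇²j + Φj` is exactly
the Jacobi operator `j'' + 2 D_yG·j' + 2 D_xG·j`. It therefore vanishes on every frame vector
(`J c' = 0` is trivially a Jacobi field), hence everywhere. -/

open Set Filter Topology ContinuousLinearMap
open scoped ContDiff

section MovingFrame

variable {ι E F : Type*} [Fintype ι] [NormedAddCommGroup E] [NormedSpace ℝ E]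
  [NormedAddCommGroup F] [NormedSpace ℝ F]

def frameMap (v : ι → E) : (ι → ℝ) →L[ℝ] E :=
  ∑ i, (proj i).smulRight (v i)

@[simp]
lemma frameMap_apply (v : ι → E) (x : ι → ℝ) : frameMap v x = ∑ i, x i • v i := by
  simp [frameMap]

lemma isInvertible_frameMap {v : ι → E} (hli : LinearIndependent ℝ v)
    (hsp : Submodule.span ℝ (range v) = ⊤) : (frameMap v).IsInvertible := by
  let b := Module.Basis.mk hli hsp.ge
  refine ⟨b.equivFun.symm.toContinuousLinearEquiv, ?_⟩
  ext x
  simp [b, Module.Basis.equivFun_symm_apply]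

lemma contDiffOn_frameMap {I : Set ℝ} {v : ι → ℝ → E} (hv : ∀ i, ContDiffOn ℝ ∞ (v i) I) :
    ContDiffOn ℝ ∞ (fun t => frameMap fun i => v i t) I :=
  ContDiffOn.sum fun i _ => (smulRightL ℝ (ι → ℝ) E (proj i)).contDiff.comp_contDiffOn (hv i)

lemma contDiffOn_of_apply_frame {I : Set ℝ} (hI : IsOpen I) {v : ι → ℝ → E} {q : ι → ℝ → F}
    (hv : ∀ i, ContDiffOn ℝ ∞ (v i) I) (hq : ∀ i, ContDiffOn ℝ ∞ (q i) I)
    (hbasis : ∀ t ∈ I, LinearIndependent ℝ (fun i => v i t) ∧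
      Submodule.span ℝ (range fun i => v i t) = ⊤)
    {J : ℝ → E →L[ℝ] F} (hJ : ∀ t ∈ I, ∀ i, J t (v i t) = q i t) :
    ContDiffOn ℝ ∞ J I := by
  set P := fun t => frameMap fun i => v i t
  have hP : ContDiffOn ℝ ∞ P I := contDiffOn_frameMap hv
  have hPinv : ∀ t ∈ I, (P t).IsInvertible := fun t ht =>
    isInvertible_frameMap (hbasis t ht).1 (hbasis t ht).2
  have hJ_eq : ∀ t ∈ I, J t = (frameMap fun i => q i t) ∘L (P t).inverse := by
    intro t ht
    have hQ : (frameMap fun i => q i t) = J t ∘L P t := by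
      ext x
      simp [P, hJ t ht]
    rw [hQ, comp_assoc, (hPinv t ht).self_comp_inverse, comp_id]
  have hinv : ContDiffOn ℝ ∞ (fun t => (P t).inverse) I := fun t ht =>
    ((hPinv t ht).contDiffAt_map_inverse.comp t (hP.contDiffAt (hI.mem_nhds ht))).contDiffWithinAt
  exact ((contDiffOn_frameMap hq).clm_comp hinv).congr hJ_eq

end MovingFrame

section Calculus

variable {E F : Type*} [NormedAddCommGroup E] [NormedSpace ℝ E]
  [NormedAddCommGroup F] [NormedSpace ℝ F]

lemma ContDiffOn.differentiableAt_of_isOpen {f : E → F} {s : Set E} (hf : ContDiffOn ℝ ∞ f s)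
    (hs : IsOpen s) {x : E} (hx : x ∈ s) : DifferentiableAt ℝ f x :=
  (hf.differentiableOn (by simp)).differentiableAt (hs.mem_nhds hx)

lemma fderiv_apply_self_of_homogeneous {f : E → F} {y : E} (hf : DifferentiableAt ℝ f y)
    (hhom : ∀ l : ℝ, 0 < l → f (l • y) = l ^ 2 • f y) :
    fderiv ℝ f y y = (2 : ℝ) • f y := by
  have hray : HasDerivAt (fun l : ℝ => f (l • y)) (fderiv ℝ f y y) 1 :=
    hf.hasFDerivAt.comp_hasDerivAt_of_eq 1 ((hasDerivAt_id 1).smul_const y) (one_smul ℝ y).symm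
      |>.congr_deriv (by simp)
  have hpow : HasDerivAt (fun l : ℝ => l ^ 2 • f y) ((2 : ℝ) • f y) 1 := by
    simpa using (hasDerivAt_pow 2 (1 : ℝ)).smul_const (f y)
  refine hray.unique (hpow.congr_of_eventuallyEq ?_)
  filter_upwards [lt_mem_nhds one_pos] with l hl using hhom l hl

variable {S : Type*} [NormedAddCommGroup S] [NormedSpace ℝ S]

lemma hasDerivAt_slice {g : ℝ × S → F} {t : ℝ} {s : S} (hg : DifferentiableAt ℝ g (t, s)) :
    HasDerivAt (fun t' => g (t', s)) (fderiv ℝ g (t, s) (1, 0)) t :=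
  hg.hasFDerivAt.comp_hasDerivAt t ((hasDerivAt_id t).prodMk (hasDerivAt_const t s))

lemma fderiv_slice_apply {g : ℝ × S → F} {t : ℝ} {s : S} (hg : DifferentiableAt ℝ g (t, s))
    (w : S) : fderiv ℝ (fun s' => g (t, s')) s w = fderiv ℝ g (t, s) (0, w) :=
  congrArg (fun L => L w) (hg.hasFDerivAt.comp s (hasFDerivAt_prodMk_right t s)).fderiv

/-- Symmetry of second derivatives: `∂_t (∂_w g) = ∂_w (∂_t g)`. -/
lemma hasDerivAt_fderiv_slice {g : ℝ × S → F} {t : ℝ} {s : S} (hg : ContDiffAt ℝ ∞ g (t, s))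
    (w : ℝ × S) :
    HasDerivAt (fun t' => fderiv ℝ g (t', s) w)
      (fderiv ℝ (fun p => fderiv ℝ g p (1, 0)) (t, s) w) t := by
  have hD : DifferentiableAt ℝ (fderiv ℝ g) (t, s) :=
    (hg.fderiv_right (m := 1) (WithTop.coe_le_coe.2 le_top)).differentiableAt (by simp)
  convert hasDerivAt_slice (hD.clm_apply (differentiableAt_const w)) using 1
  rw [fderiv_clm_apply hD (differentiableAt_const _),
    fderiv_clm_apply hD (differentiableAt_const _)]
  simpa using (hg.isSymmSndFDerivAt
    (by simpa using (WithTop.coe_le_coe.2 le_top : (2 : WithTop ℕ∞) ≤ ∞))).eq w (1, 0)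

end Calculus

section Spray

variable {n : ℕ} {G : En n × En n → En n}

lemma DxG_eq_fderiv_comp_inl {x y : En n} (h : DifferentiableAt ℝ G (x, y)) :
    DxG n G x y = fderiv ℝ G (x, y) ∘L inl ℝ (En n) (En n) :=
  (h.hasFDerivAt.comp x (hasFDerivAt_prodMk_left x y)).fderiv

lemma DyG_eq_fderiv_comp_inr {x y : En n} (h : DifferentiableAt ℝ G (x, y)) :
    DyG n G x y = fderiv ℝ G (x, y) ∘L inr ℝ (En n) (En n) :=
  (h.hasFDerivAt.comp y (hasFDerivAt_prodMk_right x y)).fderiv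

lemma fderiv_apply_eq_DxG_add_DyG {x y : En n} (h : DifferentiableAt ℝ G (x, y)) (u v : En n) :
    fderiv ℝ G (x, y) (u, v) = DxG n G x y u + DyG n G x y v := by
  rw [DxG_eq_fderiv_comp_inl h, DyG_eq_fderiv_comp_inr h, comp_apply, comp_apply, ← map_add]
  simp

lemma IsSpray.contDiffAt (hG : IsSpray n G) {x y : En n} (hy : y ≠ 0) :
    ContDiffAt ℝ ∞ G (x, y) :=
  hG.1.contDiffAt <| (isOpen_compl_singleton.preimage continuous_snd).mem_nhds (x := (x, y)) hy

lemma IsSpray.differentiableAt (hG : IsSpray n G) {x y : En n} (hy : y ≠ 0) :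
    DifferentiableAt ℝ G (x, y) :=
  (hG.contDiffAt hy).differentiableAt (by simp)

lemma IsSpray.DyG_apply_self (hG : IsSpray n G) {x y : En n} (hy : y ≠ 0) :
    DyG n G x y y = (2 : ℝ) • G (x, y) :=
  fderiv_apply_self_of_homogeneous
    ((hG.differentiableAt hy).comp y ((differentiableAt_const x).prodMk differentiableAt_id))
    (hG.2 x y hy)

end Spray

section Geodesic

variable {n : ℕ} {G : En n × En n → En n} {c : ℝ → En n} {I : Set ℝ}

lemma IsGeodesicOn.contDiffOn_deriv (hc : IsGeodesicOn n G c I) (hI : IsOpen I) :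
    ContDiffOn ℝ ∞ (deriv c) I :=
  hc.1.deriv_of_isOpen hI (by simp)

lemma IsGeodesicOn.contDiffOn_Nc (hG : IsSpray n G) (hI : IsOpen I) (hc : IsGeodesicOn n G c I) :
    ContDiffOn ℝ ∞ (Nc n G c) I := by
  have hDG : ContDiffOn ℝ ∞ (fderiv ℝ G) {p : En n × En n | p.2 ≠ 0} :=
    hG.1.fderiv_of_isOpen (isOpen_compl_singleton.preimage continuous_snd) (by simp)
  refine ((hDG.comp (hc.1.prodMk (hc.contDiffOn_deriv hI)) fun t ht => hc.2.1 t ht).clm_comp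
    (contDiffOn_const (c := inr ℝ (En n) (En n)))).congr fun t ht => ?_
  exact DyG_eq_fderiv_comp_inr (hG.differentiableAt (hc.2.1 t ht))

lemma IsGeodesicOn.isParallel_deriv (hG : IsSpray n G) (hI : IsOpen I)
    (hc : IsGeodesicOn n G c I) : IsParallel n G c I (deriv c) := by
  refine ⟨hc.contDiffOn_deriv hI, fun t ht => ?_⟩
  rw [Nc, hG.DyG_apply_self (hc.2.1 t ht)]
  exact hc.2.2 t ht

end Geodesic

section JacobiFields

variable {n : ℕ} {G : En n × En n → En n} {c : ℝ → En n} {I : Set ℝ}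

lemma isJacobiField_zero : IsJacobiField n G c I 0 :=
  ⟨contDiffOn_const, fun t _ => by simp⟩

lemma fderiv_add_two_smul_comp_eq_zero {X : Type*} [NormedAddCommGroup X] [NormedSpace ℝ X]
    {A B C : X → En n} {p : X} (hA : DifferentiableAt ℝ A p) (hB : DifferentiableAt ℝ B p)
    (hC : DifferentiableAt ℝ C p) (hG : DifferentiableAt ℝ G (B p, C p))
    (h : ∀ᶠ q in 𝓝 p, A q + (2 : ℝ) • G (B q, C q) = 0) (w : X) :
    fderiv ℝ A p w + (2 : ℝ) • (DxG n G (B p) (C p) (fderiv ℝ B p w)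
      + DyG n G (B p) (C p) (fderiv ℝ C p w)) = 0 := by
  have hH : HasFDerivAt (fun q => A q + (2 : ℝ) • G (B q, C q))
      (fderiv ℝ A p + (2 : ℝ) • (fderiv ℝ G (B p, C p) ∘L (fderiv ℝ B p).prod (fderiv ℝ C p))) p :=
    hA.hasFDerivAt.add
      ((hG.hasFDerivAt.comp p (hB.hasFDerivAt.prodMk hC.hasFDerivAt)).const_smul (2 : ℝ))
  have h0 : HasFDerivAt (fun q => A q + (2 : ℝ) • G (B q, C q)) (0 : X →L[ℝ] En n) p :=
    (hasFDerivAt_const 0 p).congr_of_eventuallyEq h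
  simpa [fderiv_apply_eq_DxG_add_DyG hG] using congrArg (fun L => L w) (hH.unique h0)

variable {S : Type*} [NormedAddCommGroup S] [NormedSpace ℝ S] {O : Set S} {V : ℝ × S → En n}

lemma geodesic_equation_of_geodesic_family (hI : IsOpen I) (hO : IsOpen O) (hV : ContDiffOn ℝ ∞ V (I ×ˢ O))
    (hgeo : ∀ s ∈ O, IsGeodesicOn n G (fun t => V (t, s)) I) {p : ℝ × S} (hp : p ∈ I ×ˢ O) :
    fderiv ℝ (fun q => fderiv ℝ V q (1, 0)) p (1, 0) + (2 : ℝ) • G (V p, fderiv ℝ V p (1, 0))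
      = 0 := by
  obtain ⟨t, s⟩ := p
  have hU : IsOpen (I ×ˢ O) := hI.prod hO
  have hV₁ : ContDiffOn ℝ ∞ (fun q => fderiv ℝ V q (1, 0)) (I ×ˢ O) :=
    (hV.fderiv_of_isOpen hU (by simp)).clm_apply contDiffOn_const
  have hslice : EqOn (deriv fun t => V (t, s)) (fun t => fderiv ℝ V (t, s) (1, 0)) I :=
    fun t ht => (hasDerivAt_slice (hV.differentiableAt_of_isOpen hU ⟨ht, hp.2⟩)).deriv
  have h := (hgeo s hp.2).2.2 t hp.1
  rwa [hslice.deriv hI hp.1, hslice hp.1,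
    (hasDerivAt_slice (hV₁.differentiableAt_of_isOpen hU hp)).deriv] at h

lemma isJacobiField_fderiv_of_geodesic_family (hG : IsSpray n G) (hI : IsOpen I)
    (hO : IsOpen O) (h0 : (0 : S) ∈ O) (hV : ContDiffOn ℝ ∞ V (I ×ˢ O))
    (hgeo : ∀ s ∈ O, IsGeodesicOn n G (fun t => V (t, s)) I) (hc : ∀ t ∈ I, V (t, 0) = c t)
    (w : S) : IsJacobiField n G c I (fun t => fderiv ℝ (fun s => V (t, s)) 0 w) := by
  have hU : IsOpen (I ×ˢ O) := hI.prod hO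
  have hmem : ∀ t ∈ I, (t, (0 : S)) ∈ I ×ˢ O := fun t ht => ⟨ht, h0⟩
  set V₁ : ℝ × S → En n := fun p => fderiv ℝ V p (1, 0)
  have hV₁ : ContDiffOn ℝ ∞ V₁ (I ×ˢ O) :=
    (hV.fderiv_of_isOpen hU (by simp)).clm_apply contDiffOn_const
  set ŵ : ℝ × S := (0, w)
  have hderiv : ∀ {g : ℝ × S → En n}, ContDiffOn ℝ ∞ g (I ×ˢ O) → ∀ t ∈ I,
      HasDerivAt (fun t => fderiv ℝ g (t, 0) ŵ)
        (fderiv ℝ (fun p => fderiv ℝ g p (1, 0)) (t, 0) ŵ) t :=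
    fun hg t ht => hasDerivAt_fderiv_slice (hg.contDiffAt (hU.mem_nhds (hmem t ht))) ŵ
  have hj : EqOn (fun t => fderiv ℝ (fun s => V (t, s)) 0 w) (fun t => fderiv ℝ V (t, 0) ŵ) I :=
    fun t ht => fderiv_slice_apply (hV.differentiableAt_of_isOpen hU (hmem t ht)) w
  have hj' : EqOn (deriv fun t => fderiv ℝ (fun s => V (t, s)) 0 w)
      (fun t => fderiv ℝ V₁ (t, 0) ŵ) I := fun t ht =>
    (hj.deriv hI ht).trans (hderiv hV t ht).deriv
  refine ⟨?_, fun t ht => ?_⟩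
  · exact (((hV.fderiv_of_isOpen hU (by simp)).comp (contDiffOn_id.prodMk contDiffOn_const)
      hmem).clm_apply contDiffOn_const).congr hj
  have hslice : deriv (fun t => V (t, 0)) t = V₁ (t, 0) :=
    (hasDerivAt_slice (hV.differentiableAt_of_isOpen hU (hmem t ht))).deriv
  have hV₁ne : V₁ (t, 0) ≠ 0 := hslice ▸ (hgeo 0 h0).2.1 t ht
  have hc' : deriv c t = V₁ (t, 0) :=
    ((EqOn.deriv (fun t ht => (hc t ht).symm) hI) ht).trans hslice
  have hlin := fderiv_add_two_smul_comp_eq_zero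
    ((hV₁.fderiv_of_isOpen hU (by simp)).clm_apply contDiffOn_const
      |>.differentiableAt_of_isOpen hU (hmem t ht))
    (hV.differentiableAt_of_isOpen hU (hmem t ht)) (hV₁.differentiableAt_of_isOpen hU (hmem t ht))
    (hG.differentiableAt hV₁ne)
    (eventually_of_mem (hU.mem_nhds (hmem t ht)) fun p hp =>
      geodesic_equation_of_geodesic_family hI hO hV hgeo hp) ŵ
  rw [hc t ht, ← hc'] at hlin
  rw [hj'.deriv hI ht, (hderiv hV₁ t ht).deriv, hj' ht, hj ht]
  linear_combination (norm := module) hlin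

lemma isOpen_cube (k : ℕ) (ε : ℝ) : IsOpen (cube k ε) := by
  simp only [cube, ofPred_forall]
  exact isOpen_iInter_of_finite fun i => isOpen_lt (continuous_apply i).abs continuous_const

lemma IsGeodesicVariation.isJacobiField_dS {k : ℕ} {ε : ℝ} {V : ℝ × (Fin k → ℝ) → En n}
    (hG : IsSpray n G) (hI : IsOpen I) (hε : 0 < ε) (hV : IsGeodesicVariation n G c I k ε V)
    (a : Fin k) : IsJacobiField n G c I (dS n k V a) :=
  isJacobiField_fderiv_of_geodesic_family hG hI (isOpen_cube k ε) (fun _ => by simpa using hε)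
    hV.1 hV.2.2 hV.2.1 (Pi.single a 1)

end JacobiFields

section Covariant

variable {n : ℕ} {G : En n × En n → En n} {c : ℝ → En n} {I : Set ℝ}

lemma covV_congr_of_eqOn (hI : IsOpen I) {u v : ℝ → En n} (h : EqOn u v I) {t : ℝ}
    (ht : t ∈ I) : covV n G c u t = covV n G c v t := by
  rw [covV, covV, h.deriv hI ht, h ht]

lemma covE_apply_of_parallel {F : ℝ → En n →L[ℝ] En n} {v : ℝ → En n} {t : ℝ}
    (hF : DifferentiableAt ℝ F t) (hv : DifferentiableAt ℝ v t)
    (hpar : deriv v t + Nc n G c t (v t) = 0) :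
    covE n G c F t (v t) = covV n G c (fun t' => F t' (v t')) t := by
  rw [covE, covV, deriv_clm_apply hF hv, eq_neg_of_add_eq_zero_left hpar]
  simp only [add_apply, sub_apply, comp_apply, map_neg]
  abel

/-- The terms `N'j` and `N∘N j` of `∇²j` cancel against those of `Φ j`, leaving the Jacobi
operator. -/
lemma IsJacobiField.covV_covV_add_Phi (hI : IsOpen I) {j : ℝ → En n}
    (hj : IsJacobiField n G c I j) {t : ℝ} (ht : t ∈ I)
    (hN : DifferentiableAt ℝ (Nc n G c) t) :
    covV n G c (covV n G c j) t + Phi n G c t (j t) = 0 := by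
  have hjd : DifferentiableAt ℝ j t := hj.1.differentiableAt_of_isOpen hI ht
  have hj'd : DifferentiableAt ℝ (deriv j) t :=
    (hj.1.deriv_of_isOpen hI (by simp)).differentiableAt_of_isOpen hI ht
  have hderiv : deriv (covV n G c j) t =
      deriv (deriv j) t + (deriv (Nc n G c) t (j t) + Nc n G c t (deriv j t)) := by
    rw [show covV n G c j = fun t' => deriv j t' + Nc n G c t' (j t') from rfl,
      deriv_fun_add hj'd (hN.clm_apply hjd), deriv_clm_apply hN hjd]
  have hjac : deriv (deriv j) t + (2 : ℝ) • Nc n G c t (deriv j t)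
      + (2 : ℝ) • DxG n G (c t) (deriv c t) (j t) = 0 := hj.2 t ht
  rw [covV, hderiv, Phi]
  simp only [covV, sub_apply, smul_apply, comp_apply, map_add]
  linear_combination (norm := module) hjac

lemma covE_covE_add_Phi_apply_eq_zero (hG : IsSpray n G) (hI : IsOpen I)
    (hc : IsGeodesicOn n G c I) {J : ℝ → En n →L[ℝ] En n} (hJ : ContDiffOn ℝ ∞ J I)
    {v j : ℝ → En n} (hv : IsParallel n G c I v) (hj : IsJacobiField n G c I j)
    (hJv : ∀ t ∈ I, J t (v t) = j t) {t : ℝ} (ht : t ∈ I) :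
    (covE n G c (covE n G c J) t + (Phi n G c t).comp (J t)) (v t) = 0 := by
  have hN := hc.contDiffOn_Nc hG hI
  have hJ' : ContDiffOn ℝ ∞ (covE n G c J) I :=
    ((hJ.deriv_of_isOpen hI (by simp)).add (hN.clm_comp hJ)).sub (hJ.clm_comp hN)
  have hvd : ∀ t ∈ I, DifferentiableAt ℝ v t := fun t ht => hv.1.differentiableAt_of_isOpen hI ht
  have hcovE_v : EqOn (fun t' => covE n G c J t' (v t')) (covV n G c j) I := fun r hr =>
    (covE_apply_of_parallel (hJ.differentiableAt_of_isOpen hI hr) (hvd r hr) (hv.2 r hr)).trans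
      (covV_congr_of_eqOn hI hJv hr)
  rw [add_apply, comp_apply, covE_apply_of_parallel (hJ'.differentiableAt_of_isOpen hI ht)
    (hvd t ht) (hv.2 t ht), covV_congr_of_eqOn hI hcovE_v ht, hJv t ht]
  exact hj.covV_covV_add_Phi hI ht (hN.differentiableAt_of_isOpen hI ht)

end Covariant

theorem variation_defines_jacobi_tensor_general (n : ℕ)
    (G : En n × En n → En n) (hG : IsSpray n G)
    (I : Set ℝ) (hIopen : IsOpen I)
    (c : ℝ → En n) (hc : IsGeodesicOn n G c I)
    (ε : ℝ) (hε : 0 < ε) (V : ℝ × (Fin (n - 1) → ℝ) → En n)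
    (hV : IsGeodesicVariation n G c I (n - 1) ε V)
    (e : Fin (n - 1) → ℝ → En n) (he : IsParallelFrame n (n - 1) G c I e)
    (J : ℝ → En n →L[ℝ] En n)
    (hJc : ∀ t ∈ I, J t (deriv c t) = 0)
    (hJe : ∀ t ∈ I, ∀ a, J t (e a t) = dS n (n - 1) V a t) :
    IsJacobiTensor n G c I J := by
  set v : Option (Fin (n - 1)) → ℝ → En n := fun i t => i.elim (deriv c t) fun a => e a t
  set j : Option (Fin (n - 1)) → ℝ → En n := fun i t => i.elim 0 fun a => dS n (n - 1) V a t
  have hv : ∀ i, IsParallel n G c I (v i)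
    | none => hc.isParallel_deriv hG hIopen
    | some a => he.1 a
  have hj : ∀ i, IsJacobiField n G c I (j i)
    | none => isJacobiField_zero
    | some a => hV.isJacobiField_dS hG hIopen hε a
  have hJv : ∀ t ∈ I, ∀ i, J t (v i t) = j i t
    | t, ht, none => hJc t ht
    | t, ht, some a => hJe t ht a
  have hJ : ContDiffOn ℝ ∞ J I :=
    contDiffOn_of_apply_frame hIopen (fun i => (hv i).1) (fun i => (hj i).1) he.2 hJv
  refine ⟨hJ, fun t ht => coe_injective (LinearMap.ext_on_range (he.2 t ht).2 fun i => ?_)⟩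
  exact covE_covE_add_Phi_apply_eq_zero hG hIopen hc hJ (hv i) (hj i) (fun t ht => hJv t ht i) ht

/-- The endomorphism field determined by `J·c' = 0` and `J·e_a = ∂_{s^a}V(·,0)` for an
`(n−1)`-parameter geodesic variation `V` is a (in particular `C^∞`) Jacobi tensor. -/
theorem variation_defines_jacobi_tensor (n : ℕ) (hn : 2 ≤ n)
    (G : En n × En n → En n) (hG : IsSpray n G)
    (I : Set ℝ) (hIopen : IsOpen I) (hIconn : I.OrdConnected)
    (c : ℝ → En n) (hc : IsGeodesicOn n G c I)
    (ε : ℝ) (hε : 0 < ε) (V : ℝ × (Fin (n - 1) → ℝ) → En n)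
    (hV : IsGeodesicVariation n G c I (n - 1) ε V)
    (e : Fin (n - 1) → ℝ → En n) (he : IsParallelFrame n (n - 1) G c I e)
    (J : ℝ → En n →L[ℝ] En n)
    (hJc : ∀ t ∈ I, J t (deriv c t) = 0)
    (hJe : ∀ t ∈ I, ∀ a, J t (e a t) = dS n (n - 1) V a t) :
    IsJacobiTensor n G c I J :=
  variation_defines_jacobi_tensor_general n G hG I hIopen c hc ε hε V hV e he J hJc hJe
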